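/- If a regular bracket structure u = u₁⋯u_n agrees with the word w = w' x^ε (last symbol x^ε), then some regular bracket structure agrees with the cyclic conjugate x^ε w'. Specifically, if u_n = *, then u_n u₁⋯u_{n-1} works; if u_n = ] with matching bracket u_i = [, then [u₁⋯u_{i-1}]u_{i+1}⋯u_{n-1} works. -/

import Mathlib

/-- The alphabet `{[, *, ]}` of regular bracket structures. -/
inductive BSym
  | lbrack
  | star
  | rbrack
deriving DecidableEq

/-- `Agrees u w` means `u` is a regular bracket structure agreeing with the
word `w` over `X ∪ X⁻¹` (a letter is a pair `(x, ε)` with `ε : Bool`):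
stars match positive letters, and matching brackets (arising from the rule
`a ↦ [a]`) match pairs of inverse letters. -/
inductive Agrees {X : Type*} : List BSym → List (X × Bool) → Prop
  | nil : Agrees [] []
  | star (x : X) : Agrees [BSym.star] [(x, true)]
  | brack {u w} (x : X) (ε : Bool) (h : Agrees u w) :
      Agrees ([BSym.lbrack] ++ u ++ [BSym.rbrack]) ([(x, ε)] ++ w ++ [(x, !ε)])
  | append {u₁ w₁ u₂ w₂} (h₁ : Agrees u₁ w₁) (h₂ : Agrees u₂ w₂) :
      Agrees (u₁ ++ u₂) (w₁ ++ w₂)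

/-!
In an RBS agreeing with `w' x^ε` the last letter is matched either by a final `*`, so that
`ε = +1` and the rest is an RBS `v` for `w'`, or by a final `]` whose partner `[` splits
`w' = p x^{-ε} q` with RBSs `v_p`, `v_q` for `p`, `q`. Then `* v`, respectively `[v_p] v_q`,
agrees with `x^ε w'`.
-/

namespace Agrees

variable {X : Type*}

theorem last_star_or_bracket {u : List BSym} {w : List (X × Bool)} (h : Agrees u w)
    {w' : List (X × Bool)} {x : X} {ε : Bool} (hw : w = w' ++ [(x, ε)]) :
    (ε = true ∧ ∃ v, Agrees v w') ∨
      ∃ p q, w' = p ++ (x, !ε) :: q ∧ (∃ vp, Agrees vp p) ∧ ∃ vq, Agrees vq q := by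
  induction h generalizing w' with
  | nil => simp at hw
  | star y =>
    obtain ⟨rfl, -, rfl⟩ : w' = [] ∧ y = x ∧ true = ε := by
      rcases w' with _ | ⟨a, _ | ⟨b, w'⟩⟩ <;> simp_all
    exact Or.inl ⟨rfl, [], nil⟩
  | @brack _ w₀ y δ h _ =>
    obtain ⟨rfl, hlast⟩ := List.append_inj' hw rfl
    obtain ⟨rfl, rfl⟩ : y = x ∧ (!δ) = ε := by simpa using hlast
    exact Or.inr ⟨[], w₀, by simp, ⟨[], nil⟩, _, h⟩
  | @append _ w₁ _ w₂ h₁ _ ih₁ ih₂ =>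
    rcases w₂.eq_nil_or_concat with rfl | ⟨w₂', b, rfl⟩
    · exact ih₁ (by simpa using hw)
    rw [List.concat_eq_append, ← List.append_assoc] at hw
    obtain ⟨rfl, hlast⟩ := List.append_inj' hw rfl
    obtain rfl : b = (x, ε) := by simpa using hlast
    rcases ih₂ List.concat_eq_append with ⟨rfl, v, hv⟩ | ⟨p, q, rfl, ⟨vp, hvp⟩, vq, hvq⟩
    · exact Or.inl ⟨rfl, _, h₁.append hv⟩
    · exact Or.inr ⟨w₁ ++ p, q, by simp, ⟨_, h₁.append hvp⟩, _, hvq⟩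

end Agrees

/-- If an RBS agrees with `w' x^ε`, then some RBS agrees with the cyclic
conjugate `x^ε w'`. -/
theorem rbs_agrees_cyclic_conjugate {X : Type*}
    (u : List BSym) (w' : List (X × Bool)) (x : X) (ε : Bool)
    (h : Agrees u (w' ++ [(x, ε)])) :
    ∃ u' : List BSym, Agrees u' ((x, ε) :: w') := by
  rcases h.last_star_or_bracket rfl with ⟨rfl, v, hv⟩ | ⟨p, q, rfl, ⟨vp, hvp⟩, vq, hvq⟩
  · exact ⟨_, (Agrees.star x).append hv⟩
  · have hb := (Agrees.brack x ε hvp).append hvq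
    exact ⟨_, by simpa using hb⟩
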